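/- Let C ⊆ [0,1] be the standard middle-thirds Cantor set and define t : C → C by t(x) = 3x for x ≤ 1/3 and t(x) = 0 for x ≥ 2/3. Then t is a well-defined continuous surjection from C onto C, and the dynamical system (C,t) does not have shadowing. -/

import Mathlib

/-!
The map `t` is the restriction to the Cantor set of the continuous tent-like map
`x ↦ max 0 (min (3x) (2 - 3x))`. Points in `[2/3, 1]` fall onto the fixed point `0` and stay there.
For small `δ`, the orbit segment `2/3^(n+1), 2/3^n, …, 2/3` followed by a jump from `t(2/3) = 0`
back to `2/3^(n+1)` is a periodic `δ`-pseudo-orbit. A point `1/3`-shadowing it is within `1/3` of `2/3`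
at time `n`, hence lies in `[2/3, 1]` by the gap `(1/3, 2/3)` of the Cantor set; so its orbit is `0`
from time `n + 1` on, while the pseudo-orbit returns to `2/3` at time `2n + 1`.
-/

/-- The system `(X, f)` has shadowing. -/
def HasShadowing {X : Type*} [MetricSpace X] (f : X → X) : Prop :=
  ∀ ε > (0 : ℝ), ∃ δ > (0 : ℝ), ∀ x : ℕ → X,
    (∀ i : ℕ, dist (f (x i)) (x (i + 1)) < δ) →
      ∃ z : X, ∀ i : ℕ, dist (f^[i] z) (x i) < ε

/-- The finite stages of the middle-thirds construction:
`C₀ = [0,1]`, `C_{n+1} = C_n/3 ∪ (2/3 + C_n/3)`. -/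
def cantorApprox : ℕ → Set ℝ
  | 0 => Set.Icc 0 1
  | n + 1 => (fun x => x / 3) '' cantorApprox n ∪ (fun x => 2 / 3 + x / 3) '' cantorApprox n

/-- The standard middle-thirds Cantor set. -/
def middleThirdsCantorSet : Set ℝ := ⋂ n, cantorApprox n

open Function

section PseudoOrbit

variable {X : Type*} [PseudoMetricSpace X]

def IsPseudoOrbit (f : X → X) (δ : ℝ) (x : ℕ → X) : Prop :=
  ∀ i, dist (f (x i)) (x (i + 1)) < δ

theorem isPseudoOrbit_iterate_mod {f : X → X} {δ : ℝ} (hδ : 0 < δ) {x₀ : X} {n : ℕ}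
    (hreturn : dist (f^[n + 1] x₀) x₀ < δ) :
    IsPseudoOrbit f δ fun i => f^[i % (n + 1)] x₀ := by
  intro i
  dsimp only
  have hlt : i % (n + 1) < n + 1 := Nat.mod_lt i (by omega)
  rcases (Nat.lt_succ_iff.1 hlt).eq_or_lt with hlast | hinner
  · rw [Nat.succ_mod_succ_eq_zero_iff.2 hlast, hlast, ← iterate_succ_apply' f n]
    exact hreturn
  · have hstep : (i + 1) % (n + 1) = i % (n + 1) + 1 := by
      rw [← Nat.mod_add_mod, Nat.mod_eq_of_lt (by omega)]
    rwa [hstep, iterate_succ_apply', dist_self]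

end PseudoOrbit

theorem middleThirdsCantorSet_eq_cantorSet : middleThirdsCantorSet = cantorSet := by
  have hstages : ∀ n, cantorApprox n = preCantorSet n := by
    intro n
    induction n with
    | zero => rfl
    | succ n ih =>
      simp only [cantorApprox, preCantorSet_succ, ih]
      congr! 2 with x
      ring
  simp only [middleThirdsCantorSet, cantorSet, hstages]

theorem mem_cantorSet_iff {x : ℝ} :
    x ∈ cantorSet ↔ ∃ y ∈ cantorSet, x = y / 3 ∨ x = (2 + y) / 3 := by
  conv_lhs => rw [cantorSet_eq_union_halves]
  simp only [Set.mem_union, Set.mem_image]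
  grind

theorem div_three_mem_cantorSet {x : ℝ} (hx : x ∈ cantorSet) : x / 3 ∈ cantorSet :=
  mem_cantorSet_iff.2 ⟨x, hx, .inl rfl⟩

theorem div_three_pow_mem_cantorSet {x : ℝ} (hx : x ∈ cantorSet) (k : ℕ) :
    x / 3 ^ k ∈ cantorSet := by
  induction k with
  | zero => simpa using hx
  | succ k ih => simpa [pow_succ, div_div] using div_three_mem_cantorSet ih

theorem two_thirds_mem_cantorSet : (2 / 3 : ℝ) ∈ cantorSet :=
  mem_cantorSet_iff.2 ⟨0, zero_mem_cantorSet, .inr (by norm_num)⟩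

theorem le_one_third_or_two_thirds_le_of_mem_cantorSet {x : ℝ} (hx : x ∈ cantorSet) :
    x ≤ 1 / 3 ∨ 2 / 3 ≤ x := by
  obtain ⟨y, hy, rfl | rfl⟩ := mem_cantorSet_iff.1 hx <;>
    obtain ⟨hy₀, hy₁⟩ := cantorSet_subset_unitInterval hy
  · left; linarith
  · right; linarith

theorem three_mul_mem_cantorSet {x : ℝ} (hx : x ∈ cantorSet) (h : x ≤ 1 / 3) :
    3 * x ∈ cantorSet := by
  obtain ⟨y, hy, rfl | rfl⟩ := mem_cantorSet_iff.1 hx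
  · simpa [mul_div_cancel₀] using hy
  · linarith [(cantorSet_subset_unitInterval hy).1]

noncomputable def cantorTentExtension (x : ℝ) : ℝ :=
  max 0 (min (3 * x) (2 - 3 * x))

theorem cantorTentExtension_of_le {x : ℝ} (h₀ : 0 ≤ x) (h : x ≤ 1 / 3) :
    cantorTentExtension x = 3 * x := by
  rw [cantorTentExtension, min_eq_left (by linarith), max_eq_right (by linarith)]

theorem cantorTentExtension_of_ge {x : ℝ} (h : 2 / 3 ≤ x) : cantorTentExtension x = 0 := by
  rw [cantorTentExtension, max_eq_left (by simp only [min_le_iff]; right; linarith)]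

theorem cantorTentExtension_mem_cantorSet {x : ℝ} (hx : x ∈ cantorSet) :
    cantorTentExtension x ∈ cantorSet := by
  rcases le_one_third_or_two_thirds_le_of_mem_cantorSet hx with h | h
  · rw [cantorTentExtension_of_le (cantorSet_subset_unitInterval hx).1 h]
    exact three_mul_mem_cantorSet hx h
  · rw [cantorTentExtension_of_ge h]
    exact zero_mem_cantorSet

noncomputable def cantorTent (x : cantorSet) : cantorSet :=
  ⟨cantorTentExtension x, cantorTentExtension_mem_cantorSet x.2⟩

namespace cantorTent

theorem coe_of_le {x : cantorSet} (h : (x : ℝ) ≤ 1 / 3) : (cantorTent x : ℝ) = 3 * x :=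
  cantorTentExtension_of_le (cantorSet_subset_unitInterval x.2).1 h

theorem coe_of_ge {x : cantorSet} (h : 2 / 3 ≤ (x : ℝ)) : (cantorTent x : ℝ) = 0 :=
  cantorTentExtension_of_ge h

theorem continuous : Continuous cantorTent :=
  (by unfold cantorTentExtension; fun_prop :
    Continuous fun x : cantorSet => cantorTentExtension x).subtype_mk _

theorem surjective : Surjective cantorTent := by
  intro y
  have hy := cantorSet_subset_unitInterval y.2
  refine ⟨⟨y / 3, div_three_mem_cantorSet y.2⟩, Subtype.ext ?_⟩
  rw [coe_of_le (by simp only; linarith [hy.2])]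
  ring

theorem isFixedPt_zero : IsFixedPt cantorTent ⟨0, zero_mem_cantorSet⟩ :=
  Subtype.ext (by rw [coe_of_le (by norm_num)]; simp)

theorem coe_iterate_of_le {x : cantorSet} {k : ℕ} (h : (x : ℝ) ≤ 1 / 3 ^ k) :
    (cantorTent^[k] x : ℝ) = 3 ^ k * x := by
  induction k with
  | zero => simp
  | succ k ih =>
    have hprev := ih (h.trans (by gcongr <;> norm_num))
    have hsmall : (cantorTent^[k] x : ℝ) ≤ 1 / 3 := by
      calc (cantorTent^[k] x : ℝ) = 3 ^ k * x := hprev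
        _ ≤ 3 ^ k * (1 / 3 ^ (k + 1)) := by gcongr
        _ = 1 / 3 := by field_simp; ring
    rw [iterate_succ_apply', coe_of_le hsmall, hprev, pow_succ]
    ring

theorem eq_zero_of_dist_two_thirds_lt {x : cantorSet} (h : dist (x : ℝ) (2 / 3) < 1 / 3) :
    cantorTent x = ⟨0, zero_mem_cantorSet⟩ := by
  rw [Real.dist_eq, abs_lt] at h
  refine Subtype.ext (coe_of_ge ?_)
  exact (le_one_third_or_two_thirds_le_of_mem_cantorSet x.2).resolve_left (by linarith)

end cantorTent

theorem not_hasShadowing_cantorTent : ¬ HasShadowing cantorTent := by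
  intro hshadowing
  obtain ⟨δ, hδ, hshadow⟩ := hshadowing (1 / 3) (by norm_num)
  obtain ⟨n, hn⟩ := exists_pow_lt_of_lt_one hδ (by norm_num : (1 / 3 : ℝ) < 1)
  set x₀ : cantorSet := ⟨2 / 3 / 3 ^ n, div_three_pow_mem_cantorSet two_thirds_mem_cantorSet n⟩
  have htop : (cantorTent^[n] x₀ : ℝ) = 2 / 3 := by
    rw [cantorTent.coe_iterate_of_le (by dsimp [x₀]; gcongr; norm_num)]
    simp only [x₀]
    field_simp
  have hreturn : dist (cantorTent^[n + 1] x₀) x₀ < δ := by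
    rw [iterate_succ_apply', cantorTent.eq_zero_of_dist_two_thirds_lt (by norm_num [htop]),
      Subtype.dist_eq, dist_comm, Real.dist_eq, sub_zero, abs_of_pos (by positivity)]
    calc 2 / 3 / 3 ^ n < (1 / 3 : ℝ) ^ n := by rw [one_div_pow]; gcongr; norm_num
      _ < δ := hn
  obtain ⟨z, hz⟩ := hshadow _ (isPseudoOrbit_iterate_mod hδ hreturn)
  have hmod : n % (n + 1) = n := Nat.mod_eq_of_lt n.lt_succ_self
  have hzero : cantorTent^[n + 1] z = ⟨0, zero_mem_cantorSet⟩ := by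
    rw [iterate_succ_apply']
    apply cantorTent.eq_zero_of_dist_two_thirds_lt
    simpa only [hmod, Subtype.dist_eq, htop] using hz n
  have hlate := hz (n + (n + 1))
  rw [iterate_add_apply, hzero, (cantorTent.isFixedPt_zero.iterate n).eq, Nat.add_mod_right, hmod,
    Subtype.dist_eq, htop] at hlate
  norm_num at hlate

/-- There is a well-defined continuous surjection `t` of the middle-thirds Cantor set onto
itself with `t(x) = 3x` for `x ≤ 1/3` and `t(x) = 0` for `x ≥ 2/3`, and the system
`(C, t)` does not have shadowing. -/
theorem cantor_tent_no_shadowing :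
    ∃ t : middleThirdsCantorSet → middleThirdsCantorSet,
      (∀ x : middleThirdsCantorSet, ((x : ℝ) ≤ 1 / 3 → (t x : ℝ) = 3 * (x : ℝ)) ∧
        (2 / 3 ≤ (x : ℝ) → (t x : ℝ) = 0)) ∧
      Continuous t ∧ Function.Surjective t ∧ ¬ HasShadowing t := by
  rw [middleThirdsCantorSet_eq_cantorSet]
  exact ⟨cantorTent, fun _ => ⟨cantorTent.coe_of_le, cantorTent.coe_of_ge⟩,
    cantorTent.continuous, cantorTent.surjective, not_hasShadowing_cantorTent⟩
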